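/- arXiv:cs/0207066 — 4 statements merged into one kernel-verified Lean document; each statement's English description precedes it below -/
import Mathlib

section
/- Let G be a graph, v a vertex with N3(v) ≠ ∅, and D a dominating set of G. Then there exists a dominating set D' of G with |D'| ≤ |D| and v ∈ D'. -/
open Set

variable {V : Type*}

/-- Closed neighborhood N[v]. -/
def closedNbr (G : SimpleGraph V) (v : V) : Set V := insert v (G.neighborSet v)

/-- N1(v) = {u ∈ N(v) : N(u) \ N[v] ≠ ∅}. -/
def N1 (G : SimpleGraph V) (v : V) : Set V :=
  {u | u ∈ G.neighborSet v ∧ (G.neighborSet u \ closedNbr G v).Nonempty}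

/-- N2(v) = {u ∈ N(v) \ N1(v) : N(u) ∩ N1(v) ≠ ∅}. -/
def N2 (G : SimpleGraph V) (v : V) : Set V :=
  {u | u ∈ G.neighborSet v \ N1 G v ∧ (G.neighborSet u ∩ N1 G v).Nonempty}

/-- N3(v) = N(v) \ (N1(v) ∪ N2(v)). -/
def N3 (G : SimpleGraph V) (v : V) : Set V :=
  G.neighborSet v \ (N1 G v ∪ N2 G v)

/-- D is a dominating set: every vertex outside D has a neighbor in D. -/
def IsDomSet (G : SimpleGraph V) (D : Set V) : Prop :=
  ∀ u, u ∉ D → ∃ d ∈ D, G.Adj u d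

/-- The domination number γ(G). -/
noncomputable def domNum (G : SimpleGraph V) : ℕ :=
  sInf {n | ∃ D : Set V, IsDomSet G D ∧ D.ncard = n}

/-! A vertex `x ∈ N3(v)` is dominated by some `w ∈ D ∩ N[x]`. If `w ≠ v`, then `w ∈ N(v) \ N1(v)`,
so `N[w] ⊆ N[v]`, and replacing `w` by `v` in `D` keeps it dominating without enlarging it. -/

theorem mem_closedNbr {G : SimpleGraph V} {v u : V} : u ∈ closedNbr G v ↔ u = v ∨ G.Adj v u :=
  Iff.rfl

theorem IsDomSet.exists_mem_closedNbr {G : SimpleGraph V} {D : Set V} (hD : IsDomSet G D) (x : V) :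
    ∃ w ∈ D, w ∈ closedNbr G x := by
  by_cases hx : x ∈ D
  · exact ⟨x, hx, mem_insert x _⟩
  · obtain ⟨w, hw, hxw⟩ := hD x hx
    exact ⟨w, hw, Or.inr hxw⟩

theorem IsDomSet.insert_diff_singleton {G : SimpleGraph V} {D : Set V} (hD : IsDomSet G D)
    {v w : V} (hwv : closedNbr G w ⊆ closedNbr G v) :
    IsDomSet G (insert v (D \ {w})) := by
  have adj_v {u : V} (hu : u ∈ closedNbr G w) (huv : u ≠ v) : ∃ d ∈ insert v (D \ {w}), G.Adj u d :=
    ⟨v, mem_insert v _, ((mem_closedNbr.1 (hwv hu)).resolve_left huv).symm⟩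
  intro u hu
  simp only [mem_insert_iff, mem_sdiff, mem_singleton_iff, not_or, not_and, not_not] at hu
  obtain ⟨huv, hu⟩ := hu
  by_cases huw : u = w
  · exact adj_v (huw ▸ mem_insert u _) huv
  obtain ⟨d, hdD, hud⟩ := hD u (fun h => huw (hu h))
  by_cases hdw : d = w
  · exact adj_v (Or.inr (hdw ▸ hud.symm)) huv
  · exact ⟨d, mem_insert_of_mem v ⟨hdD, hdw⟩, hud⟩

theorem closedNbr_subset_of_adj_of_notMem_N1 {G : SimpleGraph V} {v w : V} (hvw : G.Adj v w)
    (hw : w ∉ N1 G v) : closedNbr G w ⊆ closedNbr G v := by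
  rintro u (rfl | hwu)
  · exact Or.inr hvw
  · by_contra hu
    exact hw ⟨hvw, u, hwu, hu⟩

theorem adj_and_notMem_N1_of_mem_N3 {G : SimpleGraph V} {v x w : V} (hx : x ∈ N3 G v)
    (hw : w ∈ closedNbr G x) (hwv : w ≠ v) : G.Adj v w ∧ w ∉ N1 G v := by
  obtain ⟨hvx, hx12⟩ := hx
  have hx1 : x ∉ N1 G v := fun h => hx12 (Or.inl h)
  rcases hw with rfl | hxw
  · exact ⟨hvx, hx1⟩
  have hw1 : w ∉ N1 G v := fun h => hx12 (Or.inr ⟨⟨hvx, hx1⟩, w, hxw, h⟩)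
  refine ⟨?_, hw1⟩
  by_contra hvw
  exact hx1 ⟨hvx, w, hxw, by simp [closedNbr, hwv, hvw]⟩

theorem stmt_3_general (G : SimpleGraph V) (v : V) (h : (N3 G v).Nonempty)
    (D : Set V) (hD : IsDomSet G D) :
    ∃ D' : Set V, IsDomSet G D' ∧ D'.ncard ≤ D.ncard ∧ v ∈ D' := by
  by_cases hv : v ∈ D
  · exact ⟨D, hD, le_rfl, hv⟩
  obtain ⟨x, hx⟩ := h
  obtain ⟨w, hwD, hxw⟩ := hD.exists_mem_closedNbr x
  obtain ⟨hvw, hw1⟩ := adj_and_notMem_N1_of_mem_N3 hx hxw (ne_of_mem_of_not_mem hwD hv)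
  exact ⟨insert v (D \ {w}),
    hD.insert_diff_singleton (closedNbr_subset_of_adj_of_notMem_N1 hvw hw1),
    (ncard_exchange hv hwD).le, mem_insert v _⟩

theorem stmt_3 [Fintype V] (G : SimpleGraph V) (v : V) (h : (N3 G v).Nonempty)
    (D : Set V) (hD : IsDomSet G D) :
    ∃ D' : Set V, IsDomSet G D' ∧ D'.ncard ≤ D.ncard ∧ v ∈ D' :=
  stmt_3_general G v h D hD
end

section
/- Let G be a graph and v, w distinct vertices with N3(v,w) ≠ ∅. Suppose no single vertex of N2(v,w) ∪ N3(v,w) dominates all of N3(v,w), and no single vertex of {v,w} dominates all of N3(v,w). Then every dominating set of G contains at least two vertices from {v, w} ∪ N2(v,w) ∪ N3(v,w), and there exists a minimum dominating set containing both v and w. -/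
open Set

variable {V : Type*}

/-- N(v,w) = N(v) ∪ N(w). -/
def nbrP (G : SimpleGraph V) (v w : V) : Set V := G.neighborSet v ∪ G.neighborSet w

/-- N[v,w] = N[v] ∪ N[w]. -/
def closedNbrP (G : SimpleGraph V) (v w : V) : Set V := closedNbr G v ∪ closedNbr G w

/-- N1(v,w) = {u ∈ N(v,w) : N(u) \ N[v,w] ≠ ∅}. -/
def N1p (G : SimpleGraph V) (v w : V) : Set V :=
  {u | u ∈ nbrP G v w ∧ (G.neighborSet u \ closedNbrP G v w).Nonempty}

/-- N2(v,w) = {u ∈ N(v,w) \ N1(v,w) : N(u) ∩ N1(v,w) ≠ ∅}. -/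
def N2p (G : SimpleGraph V) (v w : V) : Set V :=
  {u | u ∈ nbrP G v w \ N1p G v w ∧ (G.neighborSet u ∩ N1p G v w).Nonempty}

/-- N3(v,w) = N(v,w) \ (N1(v,w) ∪ N2(v,w)). -/
def N3p (G : SimpleGraph V) (v w : V) : Set V :=
  nbrP G v w \ (N1p G v w ∪ N2p G v w)


/-- Neighbors of a vertex in N(v,w) \ N1(v,w) stay in {v,w} ∪ N(v,w). -/
lemma adj_of_not_N1p (G : SimpleGraph V) (v w : V) {d u : V}
    (hd : d ∈ nbrP G v w) (hd1 : d ∉ N1p G v w) (hadj : G.Adj d u) :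
    u = v ∨ u = w ∨ u ∈ nbrP G v w := by
  have hcl : u ∈ closedNbrP G v w := by
    by_contra hu
    exact hd1 ⟨hd, ⟨u, hadj, hu⟩⟩
  rcases hcl with h | h <;> rcases h with h | h
  · exact Or.inl h
  · exact Or.inr (Or.inr (Or.inl h))
  · exact Or.inr (Or.inl h)
  · exact Or.inr (Or.inr (Or.inr h))

/-- Any neighbor of a vertex of N3(v,w) lies in {v,w} ∪ N2(v,w) ∪ N3(v,w). -/
lemma adj_N3p (G : SimpleGraph V) (v w : V) {z u : V}
    (hz : z ∈ N3p G v w) (hadj : G.Adj z u) :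
    u ∈ ({v, w} : Set V) ∪ N2p G v w ∪ N3p G v w := by
  obtain ⟨hzN, hz12⟩ := hz
  have hz1 : z ∉ N1p G v w := fun h => hz12 (Or.inl h)
  rcases adj_of_not_N1p G v w hzN hz1 hadj with h | h | h
  · exact Or.inl (Or.inl (Or.inl h))
  · exact Or.inl (Or.inl (Or.inr h))
  · -- u ∈ nbrP; u ∉ N1p (else z ∈ N2p); so u ∈ N2p ∪ N3p
    by_cases hu1 : u ∈ N1p G v w
    · exact absurd (Or.inr ⟨⟨hzN, hz1⟩, ⟨u, hadj, hu1⟩⟩) hz12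
    · by_cases hu2 : u ∈ N2p G v w
      · exact Or.inl (Or.inr hu2)
      · exact Or.inr ⟨h, fun hh => hh.elim hu1 hu2⟩

lemma nbrP_adj (G : SimpleGraph V) (v w : V) {u : V} (h : u ∈ nbrP G v w) :
    G.Adj u v ∨ G.Adj u w := h.imp (fun h => h.symm) (fun h => h.symm)

lemma domSet_univ (G : SimpleGraph V) : IsDomSet G Set.univ :=
  fun u hu => absurd (Set.mem_univ u) hu

lemma part1 [Fintype V] (G : SimpleGraph V) (v w : V)
    (hne : (N3p G v w).Nonempty)
    (hno23 : ¬ ∃ x ∈ N2p G v w ∪ N3p G v w, N3p G v w ⊆ closedNbr G x)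
    (hnovw : ¬ ∃ x ∈ ({v, w} : Set V), N3p G v w ⊆ closedNbr G x)
    (D : Set V) (hD : IsDomSet G D) :
    2 ≤ (D ∩ ({v, w} ∪ N2p G v w ∪ N3p G v w)).ncard := by
  set S : Set V := {v, w} ∪ N2p G v w ∪ N3p G v w with hS
  set T : Set V := D ∩ S with hT
  have key : ∀ z ∈ N3p G v w, ∃ x ∈ T, z ∈ closedNbr G x := by
    intro z hz
    by_cases hzD : z ∈ D
    · exact ⟨z, ⟨hzD, Or.inr hz⟩, Set.mem_insert z _⟩
    · obtain ⟨d, hdD, hadj⟩ := hD z hzD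
      exact ⟨d, ⟨hdD, adj_N3p G v w hz hadj⟩,
        Set.mem_insert_of_mem _ hadj.symm⟩
  by_contra hlt
  push_neg at hlt
  have hTne : T.Nonempty := by
    obtain ⟨z, hz⟩ := hne
    obtain ⟨x, hx, _⟩ := key z hz
    exact ⟨x, hx⟩
  have h1 : 1 ≤ T.ncard := by
    rw [Nat.one_le_iff_ne_zero]
    simpa [Set.ncard_eq_zero (T.toFinite)] using hTne.ne_empty
  have hone : T.ncard = 1 := le_antisymm (by omega) h1
  obtain ⟨x, hx⟩ := Set.ncard_eq_one.mp hone
  have hsub : N3p G v w ⊆ closedNbr G x := by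
    intro z hz
    obtain ⟨y, hy, hzy⟩ := key z hz
    rw [hx] at hy
    rwa [hy] at hzy
  have hxT : x ∈ T := by rw [hx]; exact rfl
  rcases hxT.2 with h | h
  · rcases h with h | h
    · exact hnovw ⟨x, h, hsub⟩
    · exact hno23 ⟨x, Or.inl h, hsub⟩
  · exact hno23 ⟨x, Or.inr h, hsub⟩

theorem stmt_7 [Fintype V] (G : SimpleGraph V) (v w : V) (hvw : v ≠ w)
    (hne : (N3p G v w).Nonempty)
    (hno23 : ¬ ∃ x ∈ N2p G v w ∪ N3p G v w, N3p G v w ⊆ closedNbr G x)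
    (hnovw : ¬ ∃ x ∈ ({v, w} : Set V), N3p G v w ⊆ closedNbr G x) :
    (∀ D : Set V, IsDomSet G D →
        2 ≤ (D ∩ ({v, w} ∪ N2p G v w ∪ N3p G v w)).ncard) ∧
    ∃ D : Set V, IsDomSet G D ∧ D.ncard = domNum G ∧ v ∈ D ∧ w ∈ D := by
  constructor
  · exact fun D hD => part1 G v w hne hno23 hnovw D hD
  · -- get a minimum dominating set
    have hmem : domNum G ∈ {n | ∃ D : Set V, IsDomSet G D ∧ D.ncard = n} := by
      apply Nat.sInf_mem
      exact ⟨(Set.univ : Set V).ncard, Set.univ, domSet_univ G, rfl⟩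
    obtain ⟨D, hD, hDcard⟩ := hmem
    set S : Set V := {v, w} ∪ N2p G v w ∪ N3p G v w with hS
    set D' : Set V := (D \ S) ∪ {v, w} with hD'
    have hvD' : v ∈ D' := Or.inr (Or.inl rfl)
    have hwD' : w ∈ D' := Or.inr (Or.inr rfl)
    have hdom' : IsDomSet G D' := by
      intro u hu
      have hunbr : u ∈ nbrP G v w → ∃ d ∈ D', G.Adj u d := by
        intro h
        rcases nbrP_adj G v w h with h | h
        · exact ⟨v, hvD', h⟩
        · exact ⟨w, hwD', h⟩
      by_cases huD : u ∈ D
      · -- u ∈ D but u ∉ D', so u ∈ S and u ∉ {v,w}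
        have huS : u ∈ S := by
          by_contra hus
          exact hu (Or.inl ⟨huD, hus⟩)
        have huvw : u ∉ ({v, w} : Set V) := fun h => hu (Or.inr h)
        have hun : u ∈ nbrP G v w := by
          rcases huS with h | h
          · rcases h with h | h
            · exact absurd h huvw
            · exact h.1.1
          · exact h.1
        exact hunbr hun
      · obtain ⟨d, hdD, hadj⟩ := hD u huD
        by_cases hdD' : d ∈ D'
        · exact ⟨d, hdD', hadj⟩
        · have hdS : d ∈ S := by
            by_contra hds
            exact hdD' (Or.inl ⟨hdD, hds⟩)
          have hdvw : d ∉ ({v, w} : Set V) := fun h => hdD' (Or.inr h)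
          have hd23 : d ∈ N2p G v w ∪ N3p G v w := by
            rcases hdS with h | h
            · rcases h with h | h
              · exact absurd h hdvw
              · exact Or.inl h
            · exact Or.inr h
          have hdn : d ∈ nbrP G v w := hd23.elim (fun h => h.1.1) (fun h => h.1)
          have hd1 : d ∉ N1p G v w := by
            rcases hd23 with h | h
            · exact h.1.2
            · exact fun hh => h.2 (Or.inl hh)
          rcases adj_of_not_N1p G v w hdn hd1 hadj.symm with h | h | h
          · exact absurd (hu (Or.inr (Or.inl h))) id
          · exact absurd (hu (Or.inr (Or.inr h))) id
          · exact hunbr h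
    have hcard2 : 2 ≤ (D ∩ S).ncard := part1 G v w hne hno23 hnovw D hD
    have hsplit : (D ∩ S).ncard + (D \ S).ncard = D.ncard :=
      Set.ncard_inter_add_ncard_diff_eq_ncard D S (D.toFinite)
    have hle : D'.ncard ≤ D.ncard := by
      have h1 : D'.ncard ≤ (D \ S).ncard + ({v, w} : Set V).ncard :=
        Set.ncard_union_le _ _
      have h2 : ({v, w} : Set V).ncard ≤ 2 := by
        simpa using Set.ncard_insert_le v {w}
      omega
    have hdomle : domNum G ≤ D'.ncard := Nat.sInf_le ⟨D', hdom', rfl⟩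
    exact ⟨D', hdom', le_antisymm (hle.trans_eq hDcard) (hDcard ▸ hdomle), hvD', hwD'⟩
end

section
/- Let G be a graph and v, w distinct vertices with N3(v,w) ≠ ∅ such that no single vertex of N2(v,w) ∪ N3(v,w) dominates N3(v,w), but N3(v,w) ⊆ N(v) and N3(v,w) ⊄ N(w). Then there exists a minimum dominating set of G containing v. -/
open Set

variable {V : Type*}

theorem stmt_8 [Fintype V] (G : SimpleGraph V) (v w : V) (hvw : v ≠ w)
    (hne : (N3p G v w).Nonempty)
    (hno23 : ¬ ∃ x ∈ N2p G v w ∪ N3p G v w, N3p G v w ⊆ closedNbr G x)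
    (hv : N3p G v w ⊆ G.neighborSet v)
    (hw : ¬ N3p G v w ⊆ G.neighborSet w) :
    ∃ D : Set V, IsDomSet G D ∧ D.ncard = domNum G ∧ v ∈ D := by

  classical
  -- Minimum dominating set exists
  have hSne : ({n | ∃ D : Set V, IsDomSet G D ∧ D.ncard = n}).Nonempty :=
    ⟨(Set.univ : Set V).ncard, Set.univ, fun u hu => absurd (Set.mem_univ u) hu, rfl⟩
  have hmem := Nat.sInf_mem hSne
  obtain ⟨D, hD, hDcard⟩ := hmem
  have hDcard' : D.ncard = domNum G := hDcard
  by_cases hvD : v ∈ D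
  · exact ⟨D, hD, hDcard', hvD⟩
  -- t ∈ N3p with t ∉ N(w)
  obtain ⟨t, ht3, htw⟩ : ∃ t ∈ N3p G v w, t ∉ G.neighborSet w := by
    by_contra h
    push_neg at h
    exact hw h
  -- closed neighborhoods of N3p vertices are inside N2p ∪ N3p ∪ {v, w}
  have hN3nbr : ∀ s ∈ N3p G v w, ∀ u, G.Adj s u →
      u = v ∨ u = w ∨ u ∈ N2p G v w ∪ N3p G v w := by
    intro s hs u hadj
    obtain ⟨hsP, hsN⟩ := hs
    have hsN1 : s ∉ N1p G v w := fun h => hsN (Or.inl h)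
    have hsN2 : s ∉ N2p G v w := fun h => hsN (Or.inr h)
    have huP : u ∈ closedNbrP G v w := by
      by_contra hu
      exact hsN1 ⟨hsP, ⟨u, hadj, hu⟩⟩
    rcases huP with h | h
    · rcases h with h | h
      · exact Or.inl h
      · -- u ∈ N(v) ⊆ nbrP
        have hun : u ∈ nbrP G v w := Or.inl h
        have huN1 : u ∉ N1p G v w := by
          intro hu1
          exact hsN2 ⟨⟨hsP, hsN1⟩, ⟨u, hadj, hu1⟩⟩
        by_cases hu2 : u ∈ N2p G v w
        · exact Or.inr (Or.inr (Or.inl hu2))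
        · exact Or.inr (Or.inr (Or.inr ⟨hun, fun hh => hh.elim huN1 hu2⟩))
    · rcases h with h | h
      · exact Or.inr (Or.inl h)
      · have hun : u ∈ nbrP G v w := Or.inr h
        have huN1 : u ∉ N1p G v w := by
          intro hu1
          exact hsN2 ⟨⟨hsP, hsN1⟩, ⟨u, hadj, hu1⟩⟩
        by_cases hu2 : u ∈ N2p G v w
        · exact Or.inr (Or.inr (Or.inl hu2))
        · exact Or.inr (Or.inr (Or.inr ⟨hun, fun hh => hh.elim huN1 hu2⟩))
  set A : Set V := D ∩ (N2p G v w ∪ N3p G v w ∪ {w}) with hA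
  -- every N3p vertex is dominated (in closed sense) by some element of A
  have hdomA : ∀ s ∈ N3p G v w, ∃ a ∈ A, s ∈ closedNbr G a := by
    intro s hs
    by_cases hsD : s ∈ D
    · exact ⟨s, ⟨hsD, Or.inl (Or.inr hs)⟩, Set.mem_insert s _⟩
    · obtain ⟨d, hdD, hadj⟩ := hD s hsD
      have := hN3nbr s hs d (G.adj_symm hadj).symm
      rcases this with h | h | h
      · exact absurd (h ▸ hdD) hvD
      · exact ⟨d, ⟨hdD, Or.inr (h ▸ rfl)⟩, Or.inr (G.adj_symm hadj)⟩
      · exact ⟨d, ⟨hdD, Or.inl h⟩, Or.inr (G.adj_symm hadj)⟩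
  obtain ⟨a₁, ha₁A, hta₁⟩ := hdomA t ht3
  -- A is not a single vertex
  have hA2 : ∃ a₂ ∈ A, a₂ ≠ a₁ := by
    by_contra h
    push_neg at h
    have hsub : N3p G v w ⊆ closedNbr G a₁ := by
      intro s hs
      obtain ⟨a, haA, hsa⟩ := hdomA s hs
      rwa [h a haA] at hsa
    rcases ha₁A.2 with h23 | hw1
    · exact hno23 ⟨a₁, h23, hsub⟩
    · have ha₁w : a₁ = w := hw1
      rw [ha₁w] at hta₁ hsub
      rcases hta₁ with h | h
      · -- t = w, so w ∈ N3p
        exact hno23 ⟨w, Or.inr (h ▸ ht3), hsub⟩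
      · exact htw h
  obtain ⟨a₂, ha₂A, hne₂⟩ := hA2
  have hAcard : 2 ≤ A.ncard := by
    have hsub : ({a₂, a₁} : Set V) ⊆ A := by
      intro x hx
      rcases hx with h | h
      · exact h ▸ ha₂A
      · exact h ▸ ha₁A
    calc 2 = ({a₂, a₁} : Set V).ncard := (Set.ncard_pair hne₂).symm
    _ ≤ A.ncard := Set.ncard_le_ncard hsub (Set.toFinite A)
  -- closed neighborhoods of A vertices lie in N[v] ∪ N[w]
  have hAnbr : ∀ a ∈ A, ∀ u, u = a ∨ G.Adj a u → u ∈ closedNbrP G v w := by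
    intro a haA u hu
    rcases haA.2 with h23 | hw1
    · have haP : a ∈ nbrP G v w := by
        rcases h23 with h | h
        · exact h.1.1
        · exact h.1
      have haN1 : a ∉ N1p G v w := by
        rcases h23 with h | h
        · exact h.1.2
        · exact fun hh => h.2 (Or.inl hh)
      rcases hu with rfl | hadj
      · rcases haP with h | h
        · exact Or.inl (Or.inr h)
        · exact Or.inr (Or.inr h)
      · by_contra hnc
        exact haN1 ⟨haP, ⟨u, hadj, hnc⟩⟩
    · have haw : a = w := hw1
      subst haw
      rcases hu with rfl | hadj
      · exact Or.inr (Set.mem_insert _ _)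
      · exact Or.inr (Or.inr hadj)
  -- the swapped set
  set D' : Set V := (D \ A) ∪ {v, w} with hD'
  have hvD' : v ∈ D' := Or.inr (Set.mem_insert _ _)
  have hwD' : w ∈ D' := Or.inr (Or.inr rfl)
  have hDom' : IsDomSet G D' := by
    intro u hu
    by_cases huP : u ∈ closedNbrP G v w
    · rcases huP with h | h
      · rcases h with h | h
        · exact absurd (h ▸ hvD') hu
        · exact ⟨v, hvD', G.adj_symm h⟩
      · rcases h with h | h
        · exact absurd (h ▸ hwD') hu
        · exact ⟨w, hwD', G.adj_symm h⟩
    · have huD : u ∉ D := by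
        intro huD
        have huA : u ∈ A := by
          by_contra huA
          exact hu (Or.inl ⟨huD, huA⟩)
        exact huP (hAnbr u huA u (Or.inl rfl))
      obtain ⟨d, hdD, hadj⟩ := hD u huD
      have hdA : d ∉ A := by
        intro hdA
        exact huP (hAnbr d hdA u (Or.inr (G.adj_symm hadj)))
      exact ⟨d, Or.inl ⟨hdD, hdA⟩, hadj⟩
  have hAD : A ⊆ D := Set.inter_subset_left
  have hcard' : D'.ncard ≤ D.ncard := by
    have h1 : D'.ncard ≤ (D \ A).ncard + ({v, w} : Set V).ncard :=
      Set.ncard_union_le _ _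
    have h2 : ({v, w} : Set V).ncard = 2 := Set.ncard_pair hvw
    have h3 : (D \ A).ncard = D.ncard - A.ncard := Set.ncard_diff hAD
    have h4 : A.ncard ≤ D.ncard := Set.ncard_le_ncard hAD (Set.toFinite D)
    omega
  have hge : domNum G ≤ D'.ncard := Nat.sInf_le ⟨D', hDom', rfl⟩
  have heq : D'.ncard = domNum G := le_antisymm (hcard'.trans_eq hDcard') hge
  exact ⟨D', hDom', heq, hvD'⟩
end

section
/- Let G be a plane graph reduced with respect to Rules 1 and 2, let D be a dominating set of G, and let R be a maximal D-region decomposition. If u ∈ N1(v) for some v ∈ D, then u belongs to V(R), the union of the vertex sets of the regions of R. -/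
/-!
A vertex `u ∈ N1(v)` has a neighbour `t ∉ N[v]`. Walking `v u t` and on to a vertex of `D`
dominating `t`, and stopping at the first vertex of `D` reached, gives a path of length at most
three between two `D`-vertices with no `D`-vertex inside. Arcs in the plane have empty interior,
so the drawing of this path is a degenerate region that does not overlap any other region; it can
therefore be added to any `D`-region decomposition, and maximality puts its vertices, `u` among
them, into `V(R)`.
-/

open Set

variable {V : Type*}

/-- A planar embedding of the simple graph `G`: vertices are placed at
distinct points of the plane, every edge `s(u,v)` is drawn as a simple arc
(`curve s(u,v)`) between the positions of its endpoints, two distinct edge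
curves meet only at positions of common endpoints, and no curve passes
through the position of a non-endpoint vertex. -/
structure PlaneEmb (G : SimpleGraph V) where
  pos : V → ℝ × ℝ
  pos_inj : Function.Injective pos
  curve : Sym2 V → Set (ℝ × ℝ)
  curve_path : ∀ u v : V, G.Adj u v → ∃ p : Path (pos u) (pos v),
      Function.Injective ⇑p ∧ Set.range ⇑p = curve s(u, v)
  curve_inter : ∀ e f : Sym2 V, e ∈ G.edgeSet → f ∈ G.edgeSet → e ≠ f →
      curve e ∩ curve f ⊆ {z | ∃ x : V, x ∈ e ∧ x ∈ f ∧ pos x = z}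
  curve_vert : ∀ e ∈ G.edgeSet, ∀ x : V, pos x ∈ curve e → x ∈ e

variable {G : SimpleGraph V}

/-- A region `R(v,w)` between two vertices `v` and `w` of a plane graph:
a closed subset of the plane whose boundary is formed by (the curves of the
edges of) two simple paths of length at most three connecting `v` and `w`,
and such that every vertex strictly inside the region (i.e. not on the two
boundary paths) belongs to `N(v,w) = N(v) ∪ N(w)`. -/
structure Region (emb : PlaneEmb G) (v w : V) where
  p1 : G.Walk v w
  p2 : G.Walk v w
  p1_path : p1.IsPath
  p2_path : p2.IsPath
  p1_len : p1.length ≤ 3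
  p2_len : p2.length ≤ 3
  area : Set (ℝ × ℝ)
  area_closed : IsClosed area
  boundary_eq : frontier area =
      ⋃ e ∈ {e : Sym2 V | e ∈ p1.edges ∨ e ∈ p2.edges}, emb.curve e
  boundary_sub :
      (⋃ e ∈ {e : Sym2 V | e ∈ p1.edges ∨ e ∈ p2.edges}, emb.curve e) ⊆ area
  endpoints_mem : emb.pos v ∈ area ∧ emb.pos w ∈ area
  inner_nbr : ∀ u : V, emb.pos u ∈ area → u ∉ p1.support → u ∉ p2.support →
      u ∈ G.neighborSet v ∪ G.neighborSet w

/-- The vertex set `V(R)` of a region: all vertices sitting inside or on the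
boundary of the region. -/
def Region.verts {emb : PlaneEmb G} {v w : V} (R : Region emb v w) : Set V :=
  {u | emb.pos u ∈ R.area}

/-- A region together with its pair of endpoints. -/
structure RegionAt (emb : PlaneEmb G) where
  v : V
  w : V
  R : Region emb v w

/-- `V(𝓡)`: the union of the vertex sets of the regions of a set of regions. -/
def vertsOf {emb : PlaneEmb G} (S : Set (RegionAt emb)) : Set V :=
  ⋃ r ∈ S, r.R.verts

/-- A `D`-region decomposition: a set of regions between pairs of vertices of
`D`, such that no region contains a vertex of `D` other than its endpoints,
and no two regions intersect (though they may touch on their boundaries). -/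
structure IsDecomp {emb : PlaneEmb G} (D : Set V) (S : Set (RegionAt emb)) : Prop where
  endpoints : ∀ r ∈ S, r.v ∈ D ∧ r.w ∈ D
  no_inner : ∀ r ∈ S, r.R.verts ∩ D ⊆ {r.v, r.w}
  noncross : ∀ r ∈ S, ∀ r' ∈ S, r ≠ r' →
      interior r.R.area ∩ interior r'.R.area = ∅

/-- A maximal `D`-region decomposition: no further region can be added so
that the result is again a `D`-region decomposition covering strictly more
vertices. -/
def IsMaxDecomp {emb : PlaneEmb G} (D : Set V) (S : Set (RegionAt emb)) : Prop :=
  IsDecomp D S ∧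
  ∀ r : RegionAt emb, IsDecomp D (insert r S) →
    vertsOf (insert r S) ⊆ vertsOf S

/-- `G` is reduced with respect to Rules 1 and 2 (characterized by the
properties used in the paper): for every vertex `v`, `N3(v)` contains at most
a single gadget vertex of degree one, and for every pair of distinct vertices
`v, w` with `N3(v,w) ≠ ∅` there is a single vertex in `N2(v,w) ∪ N3(v,w)`
dominating all of `N3(v,w)`. -/
def Reduced (G : SimpleGraph V) : Prop :=
  (∀ v : V, (N3 G v).Subsingleton ∧
      ∀ u ∈ N3 G v, (G.neighborSet u).ncard = 1) ∧
  (∀ v w : V, v ≠ w → (N3p G v w).Nonempty →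
      ∃ x ∈ N2p G v w ∪ N3p G v w, N3p G v w ⊆ closedNbr G x)

section ArcInterior

open Metric Topology

variable {E : Type*} [NormedAddCommGroup E] [NormedSpace ℝ E]

theorem isPreconnected_ball_diff_singleton (h : 1 < Module.rank ℝ E) (z q : E) (ε : ℝ) :
    IsPreconnected (ball z ε \ {q}) := by
  by_cases hq : q ∈ ball z ε
  · have hε : 0 < ε := pos_of_mem_ball hq
    set e := OpenPartialHomeomorph.univBall (E := E) z ε
    have htarget : e.target = ball z ε := OpenPartialHomeomorph.univBall_target z hε
    have himage : e '' {e.symm q}ᶜ = ball z ε \ {q} := by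
      ext x
      constructor
      · rintro ⟨y, hy, rfl⟩
        refine ⟨htarget ▸ e.map_source (by simp [e]), fun hyq => hy ?_⟩
        rw [← mem_singleton_iff.1 hyq, e.left_inv (by simp [e])]
        rfl
      · rintro ⟨hx, hxq⟩
        rw [← htarget] at hx hq
        refine ⟨e.symm x, fun hxq' => hxq ?_, e.right_inv hx⟩
        rw [← e.right_inv hx, ← e.right_inv hq]
        exact congrArg e hxq'
    rw [← himage]
    exact (isConnected_compl_singleton_of_one_lt_rank h _).isPreconnected.image e
      (OpenPartialHomeomorph.continuous_univBall z ε).continuousOn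
  · rw [sdiff_singleton_eq_self hq]
    exact isPreconnected_ball

/-- Removing an inner point disconnects the parameter interval, but not a ball. -/
theorem Path.interior_range_eq_empty_of_injective (h : 1 < Module.rank ℝ E) {x y : E}
    (γ : Path x y) (hγ : Function.Injective γ) : interior (Set.range γ) = ∅ := by
  have : Nontrivial E := (rank_pos_iff_nontrivial (R := ℝ)).1 (zero_lt_one.trans h)
  refine eq_empty_of_forall_notMem fun z hz => ?_
  obtain ⟨ε, hε, hball⟩ := Metric.isOpen_iff.1 isOpen_interior z hz
  have hball_range : ball z ε ⊆ Set.range γ := hball.trans interior_subset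
  obtain ⟨q, hq, hqxy⟩ : (ball z ε ∩ {x, y}ᶜ).Nonempty :=
    ((toFinite {x, y}).countable.dense_compl ℝ).inter_open_nonempty _ isOpen_ball
      (nonempty_ball.2 hε)
  obtain ⟨s, rfl⟩ := hball_range hq
  have hs0 : 0 < s := by
    refine unitInterval.pos_iff_ne_zero.2 fun hs => hqxy ?_
    simp [hs]
  have hs1 : s < 1 := by
    refine lt_of_le_of_ne le_top fun hs => hqxy ?_
    simp [hs]
  have hT : γ ⁻¹' ball z ε ∈ 𝓝 s := (isOpen_ball.preimage γ.continuous).mem_nhds hq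
  obtain ⟨l, r, ⟨hl, hr⟩, hlr⟩ := (mem_nhds_iff_exists_Ioo_subset' ⟨0, hs0⟩ ⟨1, hs1⟩).1 hT
  obtain ⟨t₁, hlt₁, ht₁⟩ := exists_between hl
  obtain ⟨t₂, ht₂, ht₂r⟩ := exists_between hr
  have hpre : IsPreconnected (γ ⁻¹' ball z ε \ {s}) := by
    rw [← (γ.continuous.isClosedEmbedding hγ).isInducing.isPreconnected_image,
      image_sdiff hγ, image_singleton, image_preimage_eq_of_subset hball_range]
    exact isPreconnected_ball_diff_singleton h z (γ s) ε
  have hs := hpre.Icc_subset ⟨hlr ⟨hlt₁, ht₁.trans hr⟩, ht₁.ne⟩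
    ⟨hlr ⟨hl.trans ht₂, ht₂r⟩, ht₂.ne'⟩ ⟨ht₁.le, ht₂.le⟩
  exact hs.2 rfl

end ArcInterior

namespace PlaneEmb

variable (emb : PlaneEmb G)

theorem pos_mem_curve_iff {e : Sym2 V} (he : e ∈ G.edgeSet) {x : V} :
    emb.pos x ∈ emb.curve e ↔ x ∈ e := by
  refine ⟨emb.curve_vert e he x, ?_⟩
  induction e using Sym2.ind with
  | _ a b =>
    obtain ⟨p, -, hrange⟩ := emb.curve_path a b he
    intro hx
    rcases Sym2.mem_iff.1 hx with rfl | rfl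
    · exact hrange ▸ ⟨0, p.source⟩
    · exact hrange ▸ ⟨1, p.target⟩

theorem isClosed_curve {e : Sym2 V} (he : e ∈ G.edgeSet) : IsClosed (emb.curve e) := by
  induction e using Sym2.ind with
  | _ a b =>
    obtain ⟨p, -, hrange⟩ := emb.curve_path a b he
    exact hrange ▸ (isCompact_range p.continuous).isClosed

theorem interior_curve_eq_empty {e : Sym2 V} (he : e ∈ G.edgeSet) :
    interior (emb.curve e) = ∅ := by
  induction e using Sym2.ind with
  | _ a b =>
    obtain ⟨p, hp, hrange⟩ := emb.curve_path a b he
    have hrank : 1 < Module.rank ℝ (ℝ × ℝ) := by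
      rw [rank_prod', Module.rank_self]
      norm_num
    exact hrange ▸ p.interior_range_eq_empty_of_injective hrank hp

def drawing {v w : V} (P : G.Walk v w) : Set (ℝ × ℝ) :=
  ⋃ e ∈ P.edges, emb.curve e

variable {emb} {v w : V} {P : G.Walk v w}

theorem isClosed_drawing : IsClosed (emb.drawing P) :=
  P.edges.finite_toSet.isClosed_biUnion fun _ he =>
    emb.isClosed_curve (P.edges_subset_edgeSet he)

theorem interior_drawing_eq_empty : interior (emb.drawing P) = ∅ := by
  rw [interior_eq_empty_iff_dense_compl, drawing, compl_iUnion₂]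
  exact dense_biInter_of_isOpen (S := {e | e ∈ P.edges})
    (fun _ he => (emb.isClosed_curve (P.edges_subset_edgeSet he)).isOpen_compl)
    P.edges.finite_toSet.countable
    fun _ he => interior_eq_empty_iff_dense_compl.1
      (emb.interior_curve_eq_empty (P.edges_subset_edgeSet he))

theorem pos_mem_drawing_iff (hP : ¬P.Nil) {x : V} :
    emb.pos x ∈ emb.drawing P ↔ x ∈ P.support := by
  simp only [drawing, mem_iUnion, exists_prop, P.mem_support_iff_exists_mem_edges_of_not_nil hP]
  exact exists_congr fun e => and_congr_right fun he =>
    emb.pos_mem_curve_iff (P.edges_subset_edgeSet he)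

end PlaneEmb

open PlaneEmb in
def Region.ofPath (emb : PlaneEmb G) {v w : V} (P : G.Walk v w) (hP : P.IsPath)
    (hlen : P.length ≤ 3) (hvw : v ≠ w) : Region emb v w where
  p1 := P
  p2 := P
  p1_path := hP
  p2_path := hP
  p1_len := hlen
  p2_len := hlen
  area := emb.drawing P
  area_closed := isClosed_drawing
  boundary_eq := by
    rw [isClosed_drawing.frontier_eq, interior_drawing_eq_empty, sdiff_empty]
    simp only [mem_ofPred_eq, or_self]
    rfl
  boundary_sub := by
    simp only [mem_ofPred_eq, or_self]
    rfl
  endpoints_mem := ⟨(pos_mem_drawing_iff (P.not_nil_of_ne hvw)).2 P.start_mem_support,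
    (pos_mem_drawing_iff (P.not_nil_of_ne hvw)).2 P.end_mem_support⟩
  inner_nbr := fun _ hx hx₁ _ =>
    absurd ((pos_mem_drawing_iff (P.not_nil_of_ne hvw)).1 hx) hx₁

theorem Region.verts_ofPath {emb : PlaneEmb G} {v w : V} {P : G.Walk v w} (hP : P.IsPath)
    (hlen : P.length ≤ 3) (hvw : v ≠ w) :
    (Region.ofPath emb P hP hlen hvw).verts = {x | x ∈ P.support} :=
  Set.ext fun _ => PlaneEmb.pos_mem_drawing_iff (P.not_nil_of_ne hvw)

section Decomp

variable {emb : PlaneEmb G} {D : Set V} {S : Set (RegionAt emb)}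

theorem IsDecomp.insert_of_interior_eq_empty (hS : IsDecomp D S) {r : RegionAt emb}
    (hv : r.v ∈ D) (hw : r.w ∈ D) (hD : r.R.verts ∩ D ⊆ {r.v, r.w})
    (hint : interior r.R.area = ∅) : IsDecomp D (insert r S) where
  endpoints := by
    rintro r' (rfl | hr')
    exacts [⟨hv, hw⟩, hS.endpoints r' hr']
  no_inner := by
    rintro r' (rfl | hr')
    exacts [hD, hS.no_inner r' hr']
  noncross := by
    rintro r₁ (rfl | hr₁) r₂ (rfl | hr₂) hne
    · exact absurd rfl hne
    · rw [hint, empty_inter]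
    · rw [hint, inter_empty]
    · exact hS.noncross r₁ hr₁ r₂ hr₂ hne

theorem IsMaxDecomp.support_subset_vertsOf (hmax : IsMaxDecomp D S) {v w : V} {P : G.Walk v w}
    (hP : P.IsPath) (hlen : P.length ≤ 3) (hvw : v ≠ w) (hv : v ∈ D) (hw : w ∈ D)
    (hPD : ∀ x ∈ P.support, x ∈ D → x = v ∨ x = w) : {x | x ∈ P.support} ⊆ vertsOf S := by
  let r : RegionAt emb := ⟨v, w, Region.ofPath emb P hP hlen hvw⟩
  have hverts : r.R.verts = {x | x ∈ P.support} := Region.verts_ofPath hP hlen hvw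
  have hinsert : IsDecomp D (insert r S) :=
    hmax.1.insert_of_interior_eq_empty hv hw
      (fun x ⟨hx, hxD⟩ => hPD x (by rwa [hverts] at hx) hxD)
      PlaneEmb.interior_drawing_eq_empty
  exact fun x hx => hmax.2 r hinsert (mem_biUnion (mem_insert r S) (by rwa [hverts]))

end Decomp

theorem exists_path_of_mem_N1 {D : Set V} (hD : IsDomSet G D) {v u : V} (hu : u ∈ N1 G v) :
    ∃ w, ∃ P : G.Walk v w, P.IsPath ∧ P.length ≤ 3 ∧ v ≠ w ∧ w ∈ D ∧ u ∈ P.support ∧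
      ∀ x ∈ P.support, x ∈ D → x = v ∨ x = w := by
  obtain ⟨hvu, t, hut, ht⟩ := hu
  simp only [SimpleGraph.mem_neighborSet] at hvu hut
  simp only [closedNbr, mem_insert_iff, SimpleGraph.mem_neighborSet, not_or] at ht
  obtain ⟨htv, hvt⟩ := ht
  by_cases huD : u ∈ D
  · refine ⟨u, .cons hvu .nil, ?_⟩
    simpa [hvu.ne] using huD
  by_cases htD : t ∈ D
  · refine ⟨t, .cons hvu (.cons hut .nil), ?_⟩
    simp [hvu.ne, hut.ne, Ne.symm htv, htD, huD]
  obtain ⟨w, hwD, htw⟩ := hD t htD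
  refine ⟨w, .cons hvu (.cons hut (.cons htw .nil)), ?_⟩
  have huw : u ≠ w := fun h => huD (h ▸ hwD)
  have hvw : v ≠ w := by
    rintro rfl
    exact hvt htw.symm
  simp [hvu.ne, hut.ne, htw.ne, Ne.symm htv, huw, hvw, hwD, huD, htD]

theorem stmt_14_general (emb : PlaneEmb G) (D : Set V)
    (hD : IsDomSet G D) (S : Set (RegionAt emb)) (hmax : IsMaxDecomp D S)
    (v : V) (hv : v ∈ D) (u : V) (hu : u ∈ N1 G v) :
    u ∈ vertsOf S := by
  obtain ⟨w, P, hP, hlen, hvw, hw, huP, hPD⟩ := exists_path_of_mem_N1 hD hu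
  exact hmax.support_subset_vertsOf hP hlen hvw hv hw hPD huP

theorem stmt_14 (hred : Reduced G) (emb : PlaneEmb G) (D : Set V)
    (hD : IsDomSet G D) (S : Set (RegionAt emb)) (hmax : IsMaxDecomp D S)
    (v : V) (hv : v ∈ D) (u : V) (hu : u ∈ N1 G v) :
    u ∈ vertsOf S :=
  stmt_14_general emb D hD S hmax v hv u hu
end
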